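/- The implicit midpoint discretization of split equation (c) (Scheme-c, equation (2.8)) conserves the kinetic energy and the electromagnetic energy separately. Suppose f^n, f^{n+1} are phase-space functions and E^n, E^{n+1}, B^n, B^{n+1} are spatial vector fields satisfying (B^{n+1} − B^n)/Δt = −∇×((E^n + E^{n+1})/2), (E^{n+1} − E^n)/Δt = ∇×((B^n + B^{n+1})/2), and (f^{n+1} − f^n)/Δt + (1/2) (v×(B^n + B^{n+1}))·∇_v ((f^n + f^{n+1})/2) = 0. Then ∫_Ωx ∫_Ωv f^{n+1} |v|² dv dx = ∫_Ωx ∫_Ωv f^n |v|² dv dx and ∫_Ωx (|E^{n+1}|² + |B^{n+1}|²) dx = ∫_Ωx (|E^n|² + |B^n|²) dx. -/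

import Mathlib

open MeasureTheory Matrix

noncomputable section

/-- Points of `ℝ³`. -/
abbrev V3 : Type := Fin 3 → ℝ

/-- Partial derivative in the `i`-th coordinate direction. -/
def pd (i : Fin 3) (g : V3 → ℝ) (x : V3) : ℝ := fderiv ℝ g x (Pi.single i 1)

/-- Curl of a vector field on `ℝ³`. -/
def curl (U : V3 → V3) (x : V3) : V3 :=
  ![pd 1 (fun y => U y 2) x - pd 2 (fun y => U y 1) x,
    pd 2 (fun y => U y 0) x - pd 0 (fun y => U y 2) x,
    pd 0 (fun y => U y 1) x - pd 1 (fun y => U y 0) x]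

/-- Gradient in the `x`-variable of a phase-space function. -/
def gradX (f : V3 → V3 → ℝ) (x v : V3) : V3 :=
  fun i => fderiv ℝ (fun y => f y v) x (Pi.single i 1)

/-- Gradient in the `v`-variable of a phase-space function. -/
def gradV (f : V3 → V3 → ℝ) (x v : V3) : V3 :=
  fun i => fderiv ℝ (fun w => f x w) v (Pi.single i 1)

/-- The period box `[0,L]³`. -/
def box (L : ℝ) : Set V3 := Set.Icc 0 (fun _ => L)

/-- A spatial vector field: smooth and `L`-periodic. -/
def IsSpatialVF (L : ℝ) (U : V3 → V3) : Prop :=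
  ContDiff ℝ (⊤ : ℕ∞) U ∧ ∀ (x : V3) (i : Fin 3), U (x + L • (Pi.single i (1:ℝ) : V3)) = U x

/-- A phase-space function: smooth, `L`-periodic in `x`, compactly supported in `v`
(uniformly in `x`). -/
def IsPhase (L : ℝ) (f : V3 → V3 → ℝ) : Prop :=
  ContDiff ℝ (⊤ : ℕ∞) (fun p : V3 × V3 => f p.1 p.2) ∧
  (∀ (x v : V3) (i : Fin 3), f (x + L • (Pi.single i (1:ℝ) : V3)) v = f x v) ∧
  ∃ R : ℝ, ∀ (x v : V3), R ≤ ‖v‖ → f x v = 0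

/-- Current density `J(x) = ∫ f(x,v) v dv`. -/
def Jcur (f : V3 → V3 → ℝ) (x : V3) : V3 := ∫ v : V3, f x v • v

/-- Kinetic energy `∫_Ωx ∫_Ωv f |v|² dv dx`. -/
def kinE (L : ℝ) (f : V3 → V3 → ℝ) : ℝ :=
  ∫ x in box L, ∫ v : V3, f x v * (v ⬝ᵥ v)

/-- Field energy `∫_Ωx |U|² dx`. -/
def fieldE (L : ℝ) (U : V3 → V3) : ℝ := ∫ x in box L, U x ⬝ᵥ U x

/-! ### Auxiliary divergence machinery -/

/-- Divergence of a vector field on `ℝ³`. -/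
def divg (F : V3 → V3) (x : V3) : ℝ := ∑ i, pd i (fun y => F y i) x

lemma pd_comp_proj {x : V3} (F : V3 → V3) (hF : DifferentiableAt ℝ F x) (i j : Fin 3) :
    pd i (fun y => F y j) x = fderiv ℝ F x (Pi.single i 1) j := by
  have h := (ContinuousLinearMap.proj (R := ℝ) (φ := fun _ : Fin 3 => ℝ) j).hasFDerivAt.comp
    x hF.hasFDerivAt
  have h2 : fderiv ℝ (fun y => F y j) x
      = (ContinuousLinearMap.proj j).comp (fderiv ℝ F x) := h.fderiv
  simp [pd, h2]

lemma divg_eq {x : V3} (F : V3 → V3) (hF : DifferentiableAt ℝ F x) :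
    divg F x = ∑ i, fderiv ℝ F x (Pi.single i 1) i := by
  simp [divg, fun i => pd_comp_proj F hF i i]

lemma comp_proj_diff (F : V3 → V3) (hF : ContDiff ℝ (⊤ : ℕ∞) F) (x : V3) (j : Fin 3) :
    DifferentiableAt ℝ (fun y => F y j) x :=
  ((ContinuousLinearMap.proj (R := ℝ) (φ := fun _ : Fin 3 => ℝ) j).hasFDerivAt.comp
    x (hF.differentiable (by simp) x).hasFDerivAt).differentiableAt

lemma cont_divg_integrand (F : V3 → V3) (hF : ContDiff ℝ (⊤ : ℕ∞) F) :
    Continuous fun x : V3 => ∑ i, fderiv ℝ F x (Pi.single i 1) i := by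
  refine continuous_finset_sum _ fun i _ => ?_
  exact (continuous_apply i).comp
    ((ContinuousLinearMap.apply ℝ V3 (Pi.single i 1)).continuous.comp
      (hF.continuous_fderiv (by simp)))

lemma insertNth_eq_add (L : ℝ) (i : Fin 3) (y : Fin 2 → ℝ) :
    (Fin.insertNth i L y : V3) = Fin.insertNth i 0 y + L • (Pi.single i (1:ℝ) : V3) := by
  funext j
  refine Fin.succAboveCases i ?_ ?_ j
  · simp
  · intro k
    simp [Fin.insertNth_apply_succAbove, Pi.single_eq_of_ne (Fin.succAbove_ne i k)]

/-- The integral of the divergence of a smooth periodic vector field over the period box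
vanishes. -/
lemma integral_divg_box (L : ℝ) (hL : 0 ≤ L) (F : V3 → V3) (hF : ContDiff ℝ (⊤ : ℕ∞) F)
    (hper : ∀ (x : V3) (i : Fin 3), F (x + L • (Pi.single i (1:ℝ) : V3)) = F x) :
    ∫ x in Set.Icc (0 : V3) (fun _ => L), divg F x = 0 := by
  have hle : (0 : V3) ≤ (fun _ => L) := fun i => hL
  have hint : IntegrableOn (fun x : V3 => ∑ i, fderiv ℝ F x (Pi.single i 1) i)
      (Set.Icc (0 : V3) (fun _ => L)) :=
    (cont_divg_integrand F hF).continuousOn.integrableOn_compact isCompact_Icc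
  have key := MeasureTheory.integral_divergence_of_hasFDerivAt_off_countable
    (a := (0 : V3)) (b := fun _ => L) hle F (fun x => fderiv ℝ F x) ∅ Set.countable_empty
    hF.continuous.continuousOn (fun x _ => (hF.differentiable (by simp) x).hasFDerivAt) hint
  have hdg : ∀ x : V3, divg F x = ∑ i, fderiv ℝ F x (Pi.single i 1) i :=
    fun x => divg_eq F (hF.differentiable (by simp) x)
  calc ∫ x in Set.Icc (0 : V3) (fun _ => L), divg F x
      = ∫ x in Set.Icc (0 : V3) (fun _ => L), ∑ i, fderiv ℝ F x (Pi.single i 1) i := by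
        exact congrArg (integral _) (funext hdg)
    _ = 0 := by
        rw [key]
        refine Finset.sum_eq_zero fun i _ => ?_
        have : ∀ y : Fin 2 → ℝ, F (Fin.insertNth i L y) i
            = F (Fin.insertNth i ((0:V3) i) y) i := by
          intro y
          have h0 : (0 : V3) i = 0 := rfl
          rw [h0, insertNth_eq_add, hper]
        rw [sub_eq_zero]
        exact congrArg (integral _) (funext this)

/-- The integral of the divergence of a smooth compactly supported vector field over `ℝ³`
vanishes. -/
lemma integral_divg_compactSupport (F : V3 → V3) (hF : ContDiff ℝ (⊤ : ℕ∞) F) (R : ℝ)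
    (hR : ∀ v : V3, R ≤ ‖v‖ → F v = 0) : ∫ v : V3, divg F v = 0 := by
  set M : ℝ := max R 0 + 1 with hM
  have hRM : R ≤ M := le_trans (le_max_left _ _) (by linarith)
  have hM0 : 0 ≤ M := by positivity
  have hzero : ∀ v : V3, R < ‖v‖ → divg F v = 0 := by
    intro v hv
    have hev : F =ᶠ[nhds v] (fun _ => (0 : V3)) := by
      filter_upwards [(isOpen_lt continuous_const continuous_norm).mem_nhds hv] with w hw
      exact hR w hw.le
    have h0 : fderiv ℝ F v = 0 := by rw [hev.fderiv_eq]; exact fderiv_const_apply _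
    rw [divg_eq F (hF.differentiable (by simp) v)]
    simp [h0]
  have houts : ∀ v : V3, v ∉ Set.Icc (fun _ => -M : V3) (fun _ => M) → divg F v = 0 := by
    intro v hv
    apply hzero
    have : ∃ i, ¬ (-M ≤ v i ∧ v i ≤ M) := by
      by_contra h
      push_neg at h
      exact hv ⟨fun i => (h i).1, fun i => (h i).2⟩
    obtain ⟨i, hi⟩ := this
    have habs : M < |v i| := by
      rcases not_and_or.1 hi with h | h
      · push_neg at h; rw [abs_of_neg (by linarith)]; linarith
      · push_neg at h; rw [abs_of_pos (by linarith)]; linarith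
    calc R < |v i| := lt_of_le_of_lt hRM habs
      _ ≤ ‖v‖ := by simpa using norm_le_pi_norm v i
  have hle : (fun _ => -M : V3) ≤ (fun _ => M) := fun i => by dsimp; linarith
  have hint : IntegrableOn (fun x : V3 => ∑ i, fderiv ℝ F x (Pi.single i 1) i)
      (Set.Icc (fun _ => -M : V3) (fun _ => M)) :=
    (cont_divg_integrand F hF).continuousOn.integrableOn_compact isCompact_Icc
  have key := MeasureTheory.integral_divergence_of_hasFDerivAt_off_countable
    (a := (fun _ => -M : V3)) (b := fun _ => M) hle F (fun x => fderiv ℝ F x) ∅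
    Set.countable_empty hF.continuous.continuousOn
    (fun x _ => (hF.differentiable (by simp) x).hasFDerivAt) hint
  have hdg : ∀ x : V3, divg F x = ∑ i, fderiv ℝ F x (Pi.single i 1) i :=
    fun x => divg_eq F (hF.differentiable (by simp) x)
  have hface : ∀ (i : Fin 3) (c : ℝ), M ≤ |c| →
      ∀ y : Fin 2 → ℝ, F (Fin.insertNth i c y) i = 0 := by
    intro i c hc y
    have : R ≤ ‖(Fin.insertNth i c y : V3)‖ := by
      calc R ≤ |c| := le_trans hRM hc
        _ = |(Fin.insertNth i c y : V3) i| := by rw [Fin.insertNth_apply_same]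
        _ ≤ ‖(Fin.insertNth i c y : V3)‖ := by
            simpa using norm_le_pi_norm (Fin.insertNth i c y : V3) i
    rw [hR _ this]; rfl
  calc ∫ v : V3, divg F v
      = ∫ v in Set.Icc (fun _ => -M : V3) (fun _ => M), divg F v :=
        (setIntegral_eq_integral_of_forall_compl_eq_zero houts).symm
    _ = ∫ v in Set.Icc (fun _ => -M : V3) (fun _ => M),
          ∑ i, fderiv ℝ F v (Pi.single i 1) i := congrArg (integral _) (funext hdg)
    _ = 0 := by
        rw [key]
        refine Finset.sum_eq_zero fun i _ => ?_
        have h1 : (fun y : Fin 2 → ℝ => F (Fin.insertNth i ((fun _ => M : V3) i) y) i)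
            = fun _ => (0:ℝ) :=
          funext fun y => hface i M (by rw [abs_of_nonneg hM0]) y
        have h2 : (fun y : Fin 2 → ℝ => F (Fin.insertNth i ((fun _ => -M : V3) i) y) i)
            = fun _ => (0:ℝ) :=
          funext fun y => hface i (-M) (by rw [abs_neg, abs_of_nonneg hM0]) y
        rw [h1, h2]
        simp

/-! ### Pointwise calculus lemmas -/

variable {x : V3} {i : Fin 3} {a b : V3 → ℝ}

lemma pd_add (ha : DifferentiableAt ℝ a x) (hb : DifferentiableAt ℝ b x) :
    pd i (fun y => a y + b y) x = pd i a x + pd i b x := by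
  simp [pd, fderiv_fun_add ha hb]

lemma pd_sub (ha : DifferentiableAt ℝ a x) (hb : DifferentiableAt ℝ b x) :
    pd i (fun y => a y - b y) x = pd i a x - pd i b x := by
  simp [pd, fderiv_fun_sub ha hb]

lemma pd_mul (ha : DifferentiableAt ℝ a x) (hb : DifferentiableAt ℝ b x) :
    pd i (fun y => a y * b y) x = pd i a x * b x + a x * pd i b x := by
  simp only [pd, fderiv_fun_mul ha hb, ContinuousLinearMap.add_apply,
    ContinuousLinearMap.smul_apply, smul_eq_mul, ContinuousLinearMap.coe_smul', Pi.smul_apply]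
  ring

lemma pd_const (c : ℝ) : pd i (fun _ => c) x = 0 := by simp [pd]

lemma pd_coord (j : Fin 3) : pd i (fun y : V3 => y j) x = if j = i then 1 else 0 := by
  have h : fderiv ℝ (fun y : V3 => y j) x = ContinuousLinearMap.proj j :=
    (ContinuousLinearMap.proj (R := ℝ) (φ := fun _ : Fin 3 => ℝ) j).hasFDerivAt.fderiv
  simp [pd, h, Pi.single_apply]

lemma divg_cross (A B : V3 → V3) (x : V3)
    (hA : ∀ j, DifferentiableAt ℝ (fun y => A y j) x)
    (hB : ∀ j, DifferentiableAt ℝ (fun y => B y j) x) :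
    divg (fun y => crossProduct (A y) (B y)) x
      = curl A x ⬝ᵥ B x - A x ⬝ᵥ curl B x := by
  have hA0 := hA 0; have hA1 := hA 1; have hA2 := hA 2
  have hB0 := hB 0; have hB1 := hB 1; have hB2 := hB 2
  simp only [divg, cross_apply, Fin.sum_univ_three, Matrix.cons_val_zero, Matrix.cons_val_one,
    Matrix.head_cons, Matrix.cons_val_two, Matrix.tail_cons]
  rw [pd_sub (by fun_prop) (by fun_prop), pd_sub (by fun_prop) (by fun_prop),
    pd_sub (by fun_prop) (by fun_prop), pd_mul hA1 hB2, pd_mul hA2 hB1, pd_mul hA2 hB0,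
    pd_mul hA0 hB2, pd_mul hA0 hB1, pd_mul hA1 hB0]
  simp only [curl, dotProduct, Fin.sum_univ_three, Matrix.cons_val_zero, Matrix.cons_val_one,
    Matrix.head_cons, Matrix.cons_val_two, Matrix.tail_cons]
  ring

lemma divg_kin (g : V3 → ℝ) (c : V3) (v : V3) (hg : DifferentiableAt ℝ g v) :
    divg (fun w => (g w * (w ⬝ᵥ w)) • ((2:ℝ)⁻¹ • (crossProduct w c : V3))) v
      = (((2:ℝ)⁻¹ • (crossProduct v c : V3)) ⬝ᵥ fun i => pd i g v) * (v ⬝ᵥ v) := by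
  simp only [divg, cross_apply, dotProduct, Fin.sum_univ_three, Pi.smul_apply, smul_eq_mul,
    Matrix.cons_val_zero, Matrix.cons_val_one, Matrix.head_cons, Matrix.cons_val_two,
    Matrix.tail_cons]
  simp (disch := fun_prop) only [pd_mul, pd_add, pd_sub, pd_const, pd_coord]
  simp only [Fin.reduceEq, reduceIte]
  ring

lemma comp_proj_contDiff (F : V3 → V3) (hF : ContDiff ℝ (⊤ : ℕ∞) F) (j : Fin 3) :
    ContDiff ℝ (⊤ : ℕ∞) fun y : V3 => F y j :=
  (ContinuousLinearMap.proj (R := ℝ) (φ := fun _ : Fin 3 => ℝ) j).contDiff.comp hF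

lemma cont_dot (F : V3 → V3) (hF : ContDiff ℝ (⊤ : ℕ∞) F) : Continuous fun x => F x ⬝ᵥ F x := by
  have h : ∀ j, Continuous fun y : V3 => F y j := fun j => (continuous_apply j).comp hF.continuous
  simp only [dotProduct, Fin.sum_univ_three]
  exact (((h 0).mul (h 0)).add ((h 1).mul (h 1))).add ((h 2).mul (h 2))

/-- The implicit midpoint discretization of split equation (c) (Scheme-c, equation
(2.8)) conserves the kinetic energy and the electromagnetic energy separately. -/
theorem schemeC_energy_conservation
    (L Δt : ℝ) (hL : 0 < L) (hΔt : 0 < Δt)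
    (f0 f1 : V3 → V3 → ℝ) (En E1 Bn B1 : V3 → V3)
    (hf0 : IsPhase L f0) (hf1 : IsPhase L f1)
    (hEn : IsSpatialVF L En) (hE1 : IsSpatialVF L E1)
    (hBn : IsSpatialVF L Bn) (hB1 : IsSpatialVF L B1)
    (hFaraday : ∀ x : V3,
      Δt⁻¹ • (B1 x - Bn x) = - curl (fun y => (2:ℝ)⁻¹ • (En y + E1 y)) x)
    (hAmpere : ∀ x : V3,
      Δt⁻¹ • (E1 x - En x) = curl (fun y => (2:ℝ)⁻¹ • (Bn y + B1 y)) x)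
    (hVlasov : ∀ x v : V3,
      (f1 x v - f0 x v) / Δt
        + ((2:ℝ)⁻¹ • crossProduct v (Bn x + B1 x))
            ⬝ᵥ gradV (fun y w => (f0 y w + f1 y w) / 2) x v = 0) :
    kinE L f1 = kinE L f0 ∧
    fieldE L E1 + fieldE L B1 = fieldE L En + fieldE L Bn := by
  obtain ⟨hf0s, hf0p, R0, hR0⟩ := hf0
  obtain ⟨hf1s, hf1p, R1, hR1⟩ := hf1
  have hne : Δt ≠ 0 := ne_of_gt hΔt
  have hq : ContDiff ℝ (⊤ : ℕ∞) (fun w : V3 => w ⬝ᵥ w) := by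
    simp only [dotProduct, Fin.sum_univ_three]; fun_prop
  constructor
  · -- Kinetic energy conservation
    have hpt : ∀ x : V3, (∫ v : V3, f1 x v * (v ⬝ᵥ v)) = ∫ v : V3, f0 x v * (v ⬝ᵥ v) := by
      intro x
      have h0s : ContDiff ℝ (⊤ : ℕ∞) (fun w : V3 => f0 x w) :=
        hf0s.comp (ContDiff.prodMk (contDiff_const (c := x)) contDiff_id)
      have h1s : ContDiff ℝ (⊤ : ℕ∞) (fun w : V3 => f1 x w) :=
        hf1s.comp (ContDiff.prodMk (contDiff_const (c := x)) contDiff_id)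
      set c : V3 := Bn x + B1 x with hc
      set g : V3 → ℝ := fun w => (f0 x w + f1 x w) / 2 with hgdef
      have hgs : ContDiff ℝ (⊤ : ℕ∞) g := by
        rw [hgdef]; exact (h0s.add h1s).div_const 2
      have hcr : ContDiff ℝ (⊤ : ℕ∞) (fun w : V3 => ((2:ℝ)⁻¹ • (crossProduct w c : V3))) := by
        refine contDiff_pi.2 fun i => ?_
        fin_cases i <;>
          · simp only [cross_apply, Pi.smul_apply, smul_eq_mul, Fin.zero_eta, Fin.mk_one,
              Fin.reduceFinMk, Matrix.cons_val_zero, Matrix.cons_val_one, Matrix.head_cons,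
              Matrix.cons_val_two, Matrix.tail_cons]
            fun_prop
      set G : V3 → V3 := fun w => (g w * (w ⬝ᵥ w)) • ((2:ℝ)⁻¹ • (crossProduct w c : V3))
        with hGdef
      have hGs : ContDiff ℝ (⊤ : ℕ∞) G := by rw [hGdef]; exact (hgs.mul hq).smul hcr
      have hGsupp : ∀ w : V3, max R0 R1 ≤ ‖w‖ → G w = 0 := by
        intro w hw
        have e0 : f0 x w = 0 := hR0 x w (le_trans (le_max_left _ _) hw)
        have e1 : f1 x w = 0 := hR1 x w (le_trans (le_max_right _ _) hw)
        simp [hGdef, hgdef, e0, e1]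
      have hdiv0 : ∫ w : V3, divg G w = 0 :=
        integral_divg_compactSupport G hGs _ hGsupp
      have hptv : ∀ v : V3, f1 x v * (v ⬝ᵥ v) - f0 x v * (v ⬝ᵥ v) = (-Δt) * divg G v := by
        intro v
        have hk := divg_kin g c v ((hgs.differentiable (by simp)) v)
        have hgr : gradV (fun y w => (f0 y w + f1 y w) / 2) x v = fun i => pd i g v := rfl
        have hv := hVlasov x v
        rw [hgr, ← hc] at hv
        rw [hk]
        simp only [dotProduct, Fin.sum_univ_three, Pi.smul_apply, smul_eq_mul] at hv ⊢
        field_simp at hv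
        linear_combination ((v 0 * v 0 + v 1 * v 1 + v 2 * v 2) / 2) * hv
      have hint1 : Integrable (fun v : V3 => f1 x v * (v ⬝ᵥ v)) := by
        apply Continuous.integrable_of_hasCompactSupport (h1s.continuous.mul hq.continuous)
        refine HasCompactSupport.intro (isCompact_closedBall (0:V3) R1) ?_
        intro w hw
        have : R1 ≤ ‖w‖ := by
          have := Metric.mem_closedBall.not.1 hw
          rw [dist_zero_right] at this
          linarith [not_le.1 this]
        simp [hR1 x w this]
      have hint0 : Integrable (fun v : V3 => f0 x v * (v ⬝ᵥ v)) := by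
        apply Continuous.integrable_of_hasCompactSupport (h0s.continuous.mul hq.continuous)
        refine HasCompactSupport.intro (isCompact_closedBall (0:V3) R0) ?_
        intro w hw
        have : R0 ≤ ‖w‖ := by
          have := Metric.mem_closedBall.not.1 hw
          rw [dist_zero_right] at this
          linarith [not_le.1 this]
        simp [hR0 x w this]
      have hsub := integral_sub hint1 hint0
      have h2 : ∫ v : V3, (f1 x v * (v ⬝ᵥ v) - f0 x v * (v ⬝ᵥ v)) = 0 := by
        calc ∫ v : V3, (f1 x v * (v ⬝ᵥ v) - f0 x v * (v ⬝ᵥ v))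
            = ∫ v : V3, (-Δt) * divg G v := congrArg (integral _) (funext hptv)
          _ = (-Δt) * ∫ v : V3, divg G v := integral_const_mul _ _
          _ = 0 := by rw [hdiv0]; ring
      rw [hsub] at h2
      linarith
    unfold kinE
    exact congrArg (integral _) (funext hpt)
  · -- Field energy conservation
    have hcb : IsCompact (box L) := by unfold box; exact isCompact_Icc
    have hEnC := hEn.1; have hE1C := hE1.1; have hBnC := hBn.1; have hB1C := hB1.1
    have hEbs : ContDiff ℝ (⊤ : ℕ∞) (fun y => (2:ℝ)⁻¹ • (En y + E1 y)) :=
      (hEnC.add hE1C).const_smul _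
    have hBbs : ContDiff ℝ (⊤ : ℕ∞) (fun y => (2:ℝ)⁻¹ • (Bn y + B1 y)) :=
      (hBnC.add hB1C).const_smul _
    set P : V3 → V3 := fun y =>
      crossProduct ((fun y => (2:ℝ)⁻¹ • (En y + E1 y)) y) ((fun y => (2:ℝ)⁻¹ • (Bn y + B1 y)) y)
      with hPdef
    have hPs : ContDiff ℝ (⊤ : ℕ∞) P := by
      rw [hPdef]
      refine contDiff_pi.2 fun i => ?_
      have h1 := fun j => comp_proj_contDiff En hEnC j
      have h2 := fun j => comp_proj_contDiff E1 hE1C j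
      have h3 := fun j => comp_proj_contDiff Bn hBnC j
      have h4 := fun j => comp_proj_contDiff B1 hB1C j
      fin_cases i <;>
        · simp only [cross_apply, Pi.smul_apply, Pi.add_apply, smul_eq_mul, Fin.zero_eta,
            Fin.mk_one, Fin.reduceFinMk, Matrix.cons_val_zero, Matrix.cons_val_one,
            Matrix.head_cons, Matrix.cons_val_two, Matrix.tail_cons]
          fun_prop
    have hPper : ∀ (x : V3) (i : Fin 3), P (x + L • (Pi.single i (1:ℝ) : V3)) = P x := by
      intro x i
      simp only [hPdef, hEn.2 x i, hE1.2 x i, hBn.2 x i, hB1.2 x i]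
    have hfe : ∀ x : V3, E1 x ⬝ᵥ E1 x + B1 x ⬝ᵥ B1 x
        = (En x ⬝ᵥ En x + Bn x ⬝ᵥ Bn x) + (-(2*Δt)) * divg P x := by
      intro x
      have hc := divg_cross (fun y => (2:ℝ)⁻¹ • (En y + E1 y))
        (fun y => (2:ℝ)⁻¹ • (Bn y + B1 y)) x
        (fun j => comp_proj_diff _ hEbs x j) (fun j => comp_proj_diff _ hBbs x j)
      have e : ∀ j : Fin 3, E1 x j
          = En x j + Δt * curl (fun y => (2:ℝ)⁻¹ • (Bn y + B1 y)) x j := by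
        intro j
        have h := congrFun (hAmpere x) j
        simp only [Pi.smul_apply, Pi.sub_apply, smul_eq_mul] at h
        rw [inv_mul_eq_iff_eq_mul₀ hne] at h
        linarith
      have b : ∀ j : Fin 3, B1 x j
          = Bn x j - Δt * curl (fun y => (2:ℝ)⁻¹ • (En y + E1 y)) x j := by
        intro j
        have h := congrFun (hFaraday x) j
        simp only [Pi.smul_apply, Pi.sub_apply, Pi.neg_apply, smul_eq_mul] at h
        rw [inv_mul_eq_iff_eq_mul₀ hne] at h
        linarith
      rw [show divg P x = divg (fun y =>
          crossProduct ((fun y => (2:ℝ)⁻¹ • (En y + E1 y)) y)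
            ((fun y => (2:ℝ)⁻¹ • (Bn y + B1 y)) y)) x from by rw [hPdef], hc]
      simp only [dotProduct, Fin.sum_univ_three, Pi.smul_apply, Pi.add_apply, smul_eq_mul]
      rw [e 0, e 1, e 2, b 0, b 1, b 2]
      ring
    have hcE1 : Continuous fun x => E1 x ⬝ᵥ E1 x := cont_dot E1 hE1C
    have hcB1 : Continuous fun x => B1 x ⬝ᵥ B1 x := cont_dot B1 hB1C
    have hcEn : Continuous fun x => En x ⬝ᵥ En x := cont_dot En hEnC
    have hcBn : Continuous fun x => Bn x ⬝ᵥ Bn x := cont_dot Bn hBnC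
    have hiE1 : IntegrableOn (fun x => E1 x ⬝ᵥ E1 x) (box L) :=
      hcE1.continuousOn.integrableOn_compact hcb
    have hiB1 : IntegrableOn (fun x => B1 x ⬝ᵥ B1 x) (box L) :=
      hcB1.continuousOn.integrableOn_compact hcb
    have hiEn : IntegrableOn (fun x => En x ⬝ᵥ En x) (box L) :=
      hcEn.continuousOn.integrableOn_compact hcb
    have hiBn : IntegrableOn (fun x => Bn x ⬝ᵥ Bn x) (box L) :=
      hcBn.continuousOn.integrableOn_compact hcb
    have hiP : IntegrableOn (divg P) (box L) := by
      have heq : divg P = fun x => ∑ i, fderiv ℝ P x (Pi.single i 1) i :=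
        funext fun x => divg_eq P ((hPs.differentiable (by simp)) x)
      rw [heq]
      exact (cont_divg_integrand P hPs).continuousOn.integrableOn_compact hcb
    have hzero : ∫ x in box L, divg P x = 0 := by
      unfold box
      exact integral_divg_box L hL.le P hPs hPper
    unfold fieldE
    have step1 : (∫ x in box L, E1 x ⬝ᵥ E1 x) + ∫ x in box L, B1 x ⬝ᵥ B1 x
        = ∫ x in box L, (E1 x ⬝ᵥ E1 x + B1 x ⬝ᵥ B1 x) := (integral_add hiE1 hiB1).symm
    have step2 : ∫ x in box L, (E1 x ⬝ᵥ E1 x + B1 x ⬝ᵥ B1 x)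
        = ∫ x in box L, ((En x ⬝ᵥ En x + Bn x ⬝ᵥ Bn x) + (-(2*Δt)) * divg P x) :=
      congrArg (integral _) (funext hfe)
    have step3 : ∫ x in box L, ((En x ⬝ᵥ En x + Bn x ⬝ᵥ Bn x) + (-(2*Δt)) * divg P x)
        = (∫ x in box L, (En x ⬝ᵥ En x + Bn x ⬝ᵥ Bn x))
          + ∫ x in box L, (-(2*Δt)) * divg P x :=
      integral_add (hiEn.add hiBn) (hiP.const_mul _)
    have step4 : ∫ x in box L, (-(2*Δt)) * divg P x = 0 := by
      rw [integral_const_mul, hzero]; ring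
    have step5 : ∫ x in box L, (En x ⬝ᵥ En x + Bn x ⬝ᵥ Bn x)
        = (∫ x in box L, En x ⬝ᵥ En x) + ∫ x in box L, Bn x ⬝ᵥ Bn x :=
      integral_add hiEn hiBn
    rw [step1, step2, step3, step4, step5]
    ring
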